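/- Let f: [0,1] → [0,1] be convex, continuous, non-increasing with f(x) ≤ 1 − x, and let f⁻¹(α) = inf{t ∈ [0,1] : f(t) ≤ α}. Then min{f, f⁻¹} need not be convex, but its double convex conjugate (min{f, f⁻¹})** is the greatest convex function dominated by min{f, f⁻¹}, is symmetric ((min{f, f⁻¹})** equals its own generalized inverse), and satisfies (min{f, f⁻¹})** ≤ f and (min{f, f⁻¹})** ≤ f⁻¹. -/

import Mathlib

/-- Generalized inverse of a trade-off function. -/
noncomputable def tradeOffInv (f : ℝ → ℝ) (α : ℝ) : ℝ :=
  sInf {t ∈ Set.Icc (0:ℝ) 1 | f t ≤ α}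

/-- Convex conjugate of a function, restricted to [0,1]. -/
noncomputable def conj01 (g : ℝ → ℝ) (y : ℝ) : ℝ :=
  sSup {z | ∃ x ∈ Set.Icc (0:ℝ) 1, z = y * x - g x}

/-- Double convex conjugate (biconjugate) restricted to [0,1]. -/
noncomputable def biconj01 (g : ℝ → ℝ) (x : ℝ) : ℝ :=
  sSup {z | ∃ y : ℝ, z = x * y - conj01 g y}

open Set

section helpers


variable {g : ℝ → ℝ}

lemma conj01_nonempty (g : ℝ → ℝ) (y : ℝ) :
    {z | ∃ x ∈ Icc (0:ℝ) 1, z = y * x - g x}.Nonempty :=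
  ⟨y * 0 - g 0, 0, ⟨le_rfl, zero_le_one⟩, rfl⟩

lemma conj01_bddAbove (hg0 : ∀ x ∈ Icc (0:ℝ) 1, 0 ≤ g x) (y : ℝ) :
    BddAbove {z | ∃ x ∈ Icc (0:ℝ) 1, z = y * x - g x} := by
  refine ⟨|y|, ?_⟩
  rintro z ⟨x, hx, rfl⟩
  have h1 : y * x ≤ |y| * x := mul_le_mul_of_nonneg_right (le_abs_self y) hx.1
  have h2 : |y| * x ≤ |y| * 1 := mul_le_mul_of_nonneg_left hx.2 (abs_nonneg y)
  have := hg0 x hx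
  simp only [mul_one] at h2
  linarith

lemma conj01_le (g : ℝ → ℝ) {y a : ℝ} (h : ∀ x ∈ Icc (0:ℝ) 1, y * x - g x ≤ a) :
    conj01 g y ≤ a :=
  csSup_le (conj01_nonempty g y) (by rintro z ⟨x, hx, rfl⟩; exact h x hx)

lemma conj01_ge (hg0 : ∀ x ∈ Icc (0:ℝ) 1, 0 ≤ g x) {x : ℝ} (hx : x ∈ Icc (0:ℝ) 1) (y : ℝ) :
    y * x - g x ≤ conj01 g y :=
  le_csSup (conj01_bddAbove hg0 y) ⟨x, hx, rfl⟩

lemma biconj01_bddAbove (hg0 : ∀ x ∈ Icc (0:ℝ) 1, 0 ≤ g x) {x : ℝ} (hx : x ∈ Icc (0:ℝ) 1) :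
    BddAbove {z | ∃ y : ℝ, z = x * y - conj01 g y} := by
  refine ⟨g x, ?_⟩
  rintro z ⟨y, rfl⟩
  have := conj01_ge hg0 hx y
  nlinarith [this]

lemma biconj01_ge (hg0 : ∀ x ∈ Icc (0:ℝ) 1, 0 ≤ g x) {x : ℝ} (hx : x ∈ Icc (0:ℝ) 1) (y : ℝ) :
    x * y - conj01 g y ≤ biconj01 g x :=
  le_csSup (biconj01_bddAbove hg0 hx) ⟨y, rfl⟩

lemma biconj01_le (g : ℝ → ℝ) {x a : ℝ} (h : ∀ y : ℝ, x * y - conj01 g y ≤ a) :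
    biconj01 g x ≤ a :=
  csSup_le ⟨x * 0 - conj01 g 0, 0, rfl⟩ (by rintro z ⟨y, rfl⟩; exact h y)

lemma biconj01_le_self (hg0 : ∀ x ∈ Icc (0:ℝ) 1, 0 ≤ g x) {x : ℝ} (hx : x ∈ Icc (0:ℝ) 1) :
    biconj01 g x ≤ g x := by
  refine biconj01_le g fun y => ?_
  have := conj01_ge hg0 hx y
  nlinarith [this]

lemma biconj01_nonneg (hg0 : ∀ x ∈ Icc (0:ℝ) 1, 0 ≤ g x) {x : ℝ} (hx : x ∈ Icc (0:ℝ) 1) :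
    0 ≤ biconj01 g x := by
  have h1 : conj01 g 0 ≤ 0 := conj01_le g fun u hu => by
    have := hg0 u hu; linarith [hg0 u hu]
  have h2 := biconj01_ge hg0 hx 0
  linarith

lemma biconj01_convexOn (hg0 : ∀ x ∈ Icc (0:ℝ) 1, 0 ≤ g x) :
    ConvexOn ℝ (Icc (0:ℝ) 1) (biconj01 g) := by
  refine ⟨convex_Icc 0 1, fun x hx y hy a b ha hb hab => ?_⟩
  simp only [smul_eq_mul]
  refine biconj01_le g fun y0 => ?_
  have h1 := biconj01_ge hg0 hx y0
  have h2 := biconj01_ge hg0 hy y0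
  have e : (a * x + b * y) * y0 - conj01 g y0
      = a * (x * y0 - conj01 g y0) + b * (y * y0 - conj01 g y0) := by
    linear_combination (conj01 g y0) * hab
  rw [e]
  have := mul_le_mul_of_nonneg_left h1 ha
  have := mul_le_mul_of_nonneg_left h2 hb
  linarith

lemma exists_support {h : ℝ → ℝ} (hconv : ConvexOn ℝ (Icc (0:ℝ) 1) h) {x : ℝ}
    (hx : x ∈ Ioo (0:ℝ) 1) :
    ∃ y : ℝ, ∀ u ∈ Icc (0:ℝ) 1, h x + y * (u - x) ≤ h u := by
  set S := {z | ∃ u ∈ Ico (0:ℝ) x, z = (h x - h u) / (x - u)} with hS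
  have hne : S.Nonempty := ⟨(h x - h 0) / (x - 0), 0, ⟨le_rfl, hx.1⟩, rfl⟩
  have hub : ∀ v ∈ Ioc x 1, ∀ z ∈ S, z ≤ (h v - h x) / (v - x) := by
    rintro v hv z ⟨u, hu, rfl⟩
    exact hconv.slope_mono_adjacent ⟨hu.1, hu.2.le.trans hx.2.le⟩
      ⟨hx.1.le.trans hv.1.le, hv.2⟩ hu.2 hv.1
  have hbdd : BddAbove S := ⟨(h 1 - h x) / (1 - x), hub 1 ⟨hx.2, le_rfl⟩⟩
  refine ⟨sSup S, fun u hu => ?_⟩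
  rcases lt_trichotomy u x with hlt | heq | hgt
  · have h1 : (h x - h u) / (x - u) ≤ sSup S := le_csSup hbdd ⟨u, ⟨hu.1, hlt⟩, rfl⟩
    have hpos : 0 < x - u := by linarith
    rw [div_le_iff₀ hpos] at h1
    nlinarith [h1]
  · subst heq; simp
  · have h2 : sSup S ≤ (h u - h x) / (u - x) := csSup_le hne (hub u ⟨hgt, hu.2⟩)
    have hpos : 0 < u - x := by linarith
    rw [le_div_iff₀ hpos] at h2
    nlinarith [h2]

lemma biconj01_greatest (hg0 : ∀ x ∈ Icc (0:ℝ) 1, 0 ≤ g x)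
    (hend0 : g 0 ≤ biconj01 g 0) (hend1 : g 1 ≤ biconj01 g 1)
    (h : ℝ → ℝ) (hconvh : ConvexOn ℝ (Icc (0:ℝ) 1) h)
    (hhg : ∀ x ∈ Icc (0:ℝ) 1, h x ≤ g x) :
    ∀ x ∈ Icc (0:ℝ) 1, h x ≤ biconj01 g x := by
  intro x hx
  rcases eq_or_lt_of_le hx.1 with h0 | h0
  · exact (h0 ▸ (hhg 0 ⟨le_rfl, zero_le_one⟩).trans hend0 : _)
  rcases eq_or_lt_of_le hx.2 with h1 | h1
  · rw [h1]; exact (hhg 1 ⟨zero_le_one, le_rfl⟩).trans hend1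
  obtain ⟨y, hy⟩ := exists_support hconvh ⟨h0, h1⟩
  have hc : conj01 g y ≤ y * x - h x := by
    refine conj01_le g fun u hu => ?_
    have := hy u hu
    have := hhg u hu
    linarith
  have := biconj01_ge hg0 hx y
  nlinarith [this]

lemma biconj01_ge_at_zero (hg0 : ∀ x ∈ Icc (0:ℝ) 1, 0 ≤ g x)
    (hlsc : ∀ c, c < g 0 → ∃ δ > 0, ∀ u ∈ Icc (0:ℝ) 1, u < δ → c ≤ g u) :
    g 0 ≤ biconj01 g 0 := by
  by_contra hlt
  push_neg at hlt
  set c := (biconj01 g 0 + g 0) / 2 with hc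
  have hnn : 0 ≤ biconj01 g 0 := biconj01_nonneg hg0 ⟨le_rfl, zero_le_one⟩
  have hcpos : 0 < c := by rw [hc]; linarith
  have hclt : c < g 0 := by rw [hc]; linarith
  obtain ⟨δ, hδ, hδg⟩ := hlsc c hclt
  set y := -c / δ with hy
  have hyneg : y ≤ 0 := by
    rw [hy]; exact div_nonpos_of_nonpos_of_nonneg (by linarith) hδ.le
  have hconj : conj01 g y ≤ -c := by
    refine conj01_le g fun u hu => ?_
    rcases lt_or_ge u δ with hud | hud
    · have := hδg u hu hud
      have : y * u ≤ 0 := mul_nonpos_of_nonpos_of_nonneg hyneg hu.1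
      linarith [hδg u hu hud]
    · have h1 : y * u ≤ y * δ := mul_le_mul_of_nonpos_left hud hyneg
      have h2 : y * δ = -c := by rw [hy]; field_simp
      have := hg0 u hu
      linarith
  have := biconj01_ge hg0 ⟨le_rfl, zero_le_one⟩ y
  have : c ≤ biconj01 g 0 := by linarith
  rw [hc] at this
  linarith

end helpers

theorem symmetrization_by_biconjugate
    (f : ℝ → ℝ)
    (hconv : ConvexOn ℝ (Set.Icc (0:ℝ) 1) f)
    (hcont : ContinuousOn f (Set.Icc (0:ℝ) 1))
    (hanti : AntitoneOn f (Set.Icc (0:ℝ) 1))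
    (hrange : ∀ x ∈ Set.Icc (0:ℝ) 1, f x ∈ Set.Icc (0:ℝ) 1)
    (hle : ∀ x ∈ Set.Icc (0:ℝ) 1, f x ≤ 1 - x)
    (finv : ℝ → ℝ) (hfinv : ∀ α, finv α = tradeOffInv f α)
    (g : ℝ → ℝ) (hg : ∀ x, g x = min (f x) (finv x)) :
    -- the biconjugate is convex,
    ConvexOn ℝ (Set.Icc (0:ℝ) 1) (biconj01 g) ∧
    -- it is dominated by min{f, f⁻¹},
    (∀ x ∈ Set.Icc (0:ℝ) 1, biconj01 g x ≤ g x) ∧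
    -- and it is the greatest convex function dominated by min{f, f⁻¹};
    (∀ h : ℝ → ℝ, ConvexOn ℝ (Set.Icc (0:ℝ) 1) h →
      (∀ x ∈ Set.Icc (0:ℝ) 1, h x ≤ g x) →
      ∀ x ∈ Set.Icc (0:ℝ) 1, h x ≤ biconj01 g x) ∧
    -- it is symmetric,
    (∀ α ∈ Set.Icc (0:ℝ) 1, tradeOffInv (biconj01 g) α = biconj01 g α) ∧
    -- and it is bounded by f and f⁻¹.
    (∀ x ∈ Set.Icc (0:ℝ) 1, biconj01 g x ≤ f x) ∧
    (∀ x ∈ Set.Icc (0:ℝ) 1, biconj01 g x ≤ finv x) := by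
  have hs0 : (0:ℝ) ∈ Icc (0:ℝ) 1 := ⟨le_rfl, zero_le_one⟩
  have hs1 : (1:ℝ) ∈ Icc (0:ℝ) 1 := ⟨zero_le_one, le_rfl⟩
  have f1 : f 1 = 0 := le_antisymm (by have := hle 1 hs1; linarith) (hrange 1 hs1).1
  have finv_nonneg : ∀ α : ℝ, 0 ≤ finv α := by
    intro α
    rw [hfinv]
    exact Real.sInf_nonneg fun t ht => ht.1.1
  have g_le_f : ∀ x, g x ≤ f x := fun x => (hg x) ▸ min_le_left _ _
  have g_le_finv : ∀ x, g x ≤ finv x := fun x => (hg x) ▸ min_le_right _ _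
  have hg0 : ∀ x ∈ Icc (0:ℝ) 1, 0 ≤ g x := by
    intro x hx
    rw [hg]
    exact le_min (hrange x hx).1 (finv_nonneg x)
  have g1 : g 1 ≤ 0 := (g_le_f 1).trans f1.le
  have bddb : ∀ (F : ℝ → ℝ) (α : ℝ), BddBelow {t ∈ Icc (0:ℝ) 1 | F t ≤ α} :=
    fun F α => ⟨0, fun t ht => ht.1.1⟩
  have finv_f_le : ∀ α ∈ Icc (0:ℝ) 1, finv (f α) ≤ α := by
    intro α hα
    rw [hfinv]
    exact csInf_le (bddb f (f α)) ⟨hα, le_rfl⟩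
  -- lower semicontinuity of g at 0 from the right
  have hlsc : ∀ c, c < g 0 → ∃ δ > 0, ∀ u ∈ Icc (0:ℝ) 1, u < δ → c ≤ g u := by
    intro c hc
    rcases le_or_gt c 0 with hc0 | hc0
    · exact ⟨1, one_pos, fun u hu _ => hc0.trans (hg0 u hu)⟩
    have hcf : c < f 0 := lt_of_lt_of_le hc (g_le_f 0)
    have hcfinv : c < finv 0 := lt_of_lt_of_le hc (g_le_finv 0)
    have hcmem : c ∈ Icc (0:ℝ) 1 := ⟨hc0.le, by
      have := (hrange 0 hs0).2; linarith⟩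
    have fc_pos : 0 < f c := by
      by_contra hfc
      push_neg at hfc
      have : finv 0 ≤ c := by
        rw [hfinv]; exact csInf_le (bddb f 0) ⟨hcmem, hfc⟩
      linarith
    obtain ⟨δ1, hδ1, hδ1p⟩ := (Metric.continuousWithinAt_iff.mp (hcont 0 hs0)) (f 0 - c)
      (by linarith)
    refine ⟨min δ1 (f c), lt_min hδ1 fc_pos, fun u hu hud => ?_⟩
    have hud1 : u < δ1 := lt_of_lt_of_le hud (min_le_left _ _)
    have hud2 : u < f c := lt_of_lt_of_le hud (min_le_right _ _)
    have hfu : c ≤ f u := by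
      have hdist : dist u 0 < δ1 := by
        rw [Real.dist_eq, sub_zero, abs_of_nonneg hu.1]; exact hud1
      have := hδ1p hu hdist
      rw [Real.dist_eq] at this
      have := abs_lt.mp this
      linarith [this.1]
    have hfinvu : c ≤ finv u := by
      rw [hfinv]
      refine le_csInf ⟨1, hs1, by rw [f1]; exact hu.1⟩ fun t ht => ?_
      by_contra htc
      push_neg at htc
      have : f c ≤ f t := hanti ht.1 hcmem htc.le
      have : f t ≤ u := ht.2
      linarith
    rw [hg]
    exact le_min hfu hfinvu
  have hend0 : g 0 ≤ biconj01 g 0 := biconj01_ge_at_zero hg0 hlsc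
  have hend1 : g 1 ≤ biconj01 g 1 := g1.trans (biconj01_nonneg hg0 hs1)
  set B := biconj01 g with hB
  have Bconv : ConvexOn ℝ (Icc (0:ℝ) 1) B := biconj01_convexOn hg0
  have Ble : ∀ x ∈ Icc (0:ℝ) 1, B x ≤ g x := fun x hx => biconj01_le_self hg0 hx
  have Bgr := biconj01_greatest hg0 hend0 hend1
  have Bnn : ∀ x ∈ Icc (0:ℝ) 1, 0 ≤ B x := fun x hx => biconj01_nonneg hg0 hx
  have Ble1 : ∀ x ∈ Icc (0:ℝ) 1, B x ≤ 1 := fun x hx =>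
    (Ble x hx).trans ((g_le_f x).trans (hrange x hx).2)
  have B1 : B 1 = 0 := le_antisymm ((Ble 1 hs1).trans g1) (Bnn 1 hs1)
  have Banti : ∀ a ∈ Icc (0:ℝ) 1, ∀ b ∈ Icc (0:ℝ) 1, a ≤ b → B b ≤ B a := by
    intro a ha b hb hab
    rcases eq_or_lt_of_le hb.2 with h1 | h1
    · rw [h1, B1]; exact Bnn a ha
    rcases eq_or_lt_of_le hab with rfl | hab'
    · exact le_rfl
    have h1a : a < 1 := hab'.trans h1
    have hden : 0 < 1 - a := by linarith
    set t := (1 - b) / (1 - a) with htdef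
    set s := (b - a) / (1 - a) with hsdef
    have ht : 0 ≤ t := div_nonneg (by linarith) hden.le
    have hs : 0 ≤ s := div_nonneg (by linarith) hden.le
    have hts : t + s = 1 := by rw [htdef, hsdef]; field_simp; ring
    have key := Bconv.2 ha hs1 ht hs hts
    have hpt : t • a + s • (1:ℝ) = b := by
      simp only [smul_eq_mul, htdef, hsdef]
      field_simp
      ring
    rw [hpt] at key
    have ht1 : t ≤ 1 := by rw [htdef, div_le_one hden]; linarith
    have : B b ≤ t * B a + s * B 1 := by simpa [smul_eq_mul] using key
    rw [B1] at this
    nlinarith [Bnn a ha]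
  have Bsub : ∀ α : ℝ, IsClosed {t | t ∈ Icc (0:ℝ) 1 ∧ B t ≤ α} := by
    intro α
    have hset : {t | t ∈ Icc (0:ℝ) 1 ∧ B t ≤ α}
        = Icc (0:ℝ) 1 ∩ ⋂ y : ℝ, {t : ℝ | t * y - conj01 g y ≤ α} := by
      ext t
      constructor
      · rintro ⟨ht, hBt⟩
        exact ⟨ht, Set.mem_iInter.mpr fun y => le_trans (biconj01_ge hg0 ht y) hBt⟩
      · rintro ⟨ht, hyt⟩
        exact ⟨ht, biconj01_le g fun y => Set.mem_iInter.mp hyt y⟩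
    rw [hset]
    exact isClosed_Icc.inter (isClosed_iInter fun y =>
      isClosed_le ((continuous_id.mul continuous_const).sub continuous_const) continuous_const)
  have Imem : ∀ α : ℝ, 0 ≤ α →
      tradeOffInv B α ∈ Icc (0:ℝ) 1 ∧ B (tradeOffInv B α) ≤ α := by
    intro α hα
    have hne : {t ∈ Icc (0:ℝ) 1 | B t ≤ α}.Nonempty := ⟨1, hs1, by rw [B1]; exact hα⟩
    exact (Bsub α).csInf_mem hne (bddb B α)
  have inv_le_iff : ∀ α : ℝ, 0 ≤ α → ∀ x ∈ Icc (0:ℝ) 1,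
      (tradeOffInv B α ≤ x ↔ B x ≤ α) := by
    intro α hα x hx
    constructor
    · intro hτ
      obtain ⟨hτm, hτB⟩ := Imem α hα
      exact le_trans (Banti _ hτm _ hx hτ) hτB
    · intro hBx
      exact csInf_le (bddb B α) ⟨hx, hBx⟩
  have Iconv : ConvexOn ℝ (Icc (0:ℝ) 1) (tradeOffInv B) := by
    refine ⟨convex_Icc 0 1, fun α hα β hβ a b ha hb hab => ?_⟩
    obtain ⟨hτ1m, hτ1B⟩ := Imem α hα.1
    obtain ⟨hτ2m, hτ2B⟩ := Imem β hβ.1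
    have hmem : a • tradeOffInv B α + b • tradeOffInv B β ∈ Icc (0:ℝ) 1 :=
      (convex_Icc 0 1) hτ1m hτ2m ha hb hab
    have hBc := Bconv.2 hτ1m hτ2m ha hb hab
    have hBle : B (a • tradeOffInv B α + b • tradeOffInv B β) ≤ a * α + b * β := by
      refine hBc.trans ?_
      simp only [smul_eq_mul]
      have := mul_le_mul_of_nonneg_left hτ1B ha
      have := mul_le_mul_of_nonneg_left hτ2B hb
      linarith
    refine csInf_le (bddb B _) ⟨hmem, ?_⟩
    simpa [smul_eq_mul] using hBle
  have I_le_g : ∀ α ∈ Icc (0:ℝ) 1, tradeOffInv B α ≤ g α := by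
    intro α hα
    have step1 : tradeOffInv B α ≤ sInf {t ∈ Icc (0:ℝ) 1 | g t ≤ α} := by
      refine csInf_le_csInf (bddb B α) ⟨1, hs1, g1.trans hα.1⟩ fun t ht => ?_
      exact ⟨ht.1, (Ble t ht.1).trans ht.2⟩
    have step2a : sInf {t ∈ Icc (0:ℝ) 1 | g t ≤ α} ≤ finv α := by
      rw [hfinv]
      refine csInf_le_csInf (bddb g α) ⟨1, hs1, by rw [f1]; exact hα.1⟩ fun t ht => ?_
      exact ⟨ht.1, (g_le_f t).trans ht.2⟩
    have step2b : sInf {t ∈ Icc (0:ℝ) 1 | g t ≤ α} ≤ f α := by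
      refine csInf_le (bddb g α) ⟨hrange α hα, ?_⟩
      exact (g_le_finv (f α)).trans (finv_f_le α hα)
    rw [hg]
    exact le_min (step1.trans step2b) (step1.trans step2a)
  have I_le_B : ∀ x ∈ Icc (0:ℝ) 1, tradeOffInv B x ≤ B x :=
    Bgr (tradeOffInv B) Iconv I_le_g
  have B_le_I : ∀ α ∈ Icc (0:ℝ) 1, B α ≤ tradeOffInv B α := by
    intro α hα
    have hII : tradeOffInv (tradeOffInv B) α = B α := by
      have hset : {β ∈ Icc (0:ℝ) 1 | tradeOffInv B β ≤ α}
          = {β ∈ Icc (0:ℝ) 1 | B α ≤ β} := by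
        ext β
        constructor
        · rintro ⟨hβ, hβI⟩
          exact ⟨hβ, ((inv_le_iff β hβ.1 α hα).mp hβI : B α ≤ β)⟩
        · rintro ⟨hβ, hβB⟩
          exact ⟨hβ, (inv_le_iff β hβ.1 α hα).mpr hβB⟩
      show sInf {β ∈ Icc (0:ℝ) 1 | tradeOffInv B β ≤ α} = B α
      rw [hset]
      refine le_antisymm (csInf_le ⟨0, fun t ht => ht.1.1⟩ ⟨⟨Bnn α hα, Ble1 α hα⟩, le_rfl⟩)
        (le_csInf ⟨1, hs1, Ble1 α hα⟩ fun β hβ => hβ.2)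
    have mono : tradeOffInv (tradeOffInv B) α ≤ tradeOffInv (tradeOffInv B) α := le_rfl
    have mono2 : tradeOffInv (tradeOffInv B) α ≤ tradeOffInv B α := by
      refine csInf_le_csInf ⟨0, fun t ht => ht.1.1⟩ ⟨1, hs1, by rw [B1]; exact hα.1⟩
        fun t ht => ⟨ht.1, (I_le_B t ht.1).trans ht.2⟩
    rw [hII] at mono2
    exact mono2
  refine ⟨Bconv, Ble, Bgr, fun α hα => le_antisymm (I_le_B α hα) (B_le_I α hα),
    fun x hx => (Ble x hx).trans (g_le_f x), fun x hx => (Ble x hx).trans (g_le_finv x)⟩
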